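/- arXiv:1908.11744 — 15 statements merged into one kernel-verified Lean document; each statement's English description precedes it below -/
import Mathlib

section
/- Let (B,+,∘,λ) be a brace-like left semi-truss with multiplicative identity 1. Then the set 1 + B = {1 + b : b ∈ B} is a subsemigroup of the group (B,∘); that is, for all a, b ∈ B there exists c ∈ B such that (1 + a) ∘ (1 + b) = 1 + c. -/
theorem stmt_1_general (B : Type*)
    (add mul : B → B → B) (one : B) (lam : B → B → B)
    (add_assoc : ∀ a b c : B, add (add a b) c = add a (add b c))
    (mul_one : ∀ a : B, mul a one = a)
    (dist : ∀ a b c : B, mul a (add b c) = add (mul a b) (lam a c)) :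
    ∀ a b : B, ∃ c : B, mul (add one a) (add one b) = add one c := by
  intro a b
  refine ⟨add a (lam (add one a) b), ?_⟩
  rw [dist, mul_one, add_assoc]

/-- Brace-like left semi-truss: `(B,+)` a semigroup, `(B,∘)` a group with
identity `one` and inverse `inv`, and `lam : B → B → B` with each `lam a` an
endomorphism of `(B,+)`, `lam` a morphism from `(B,∘)`, and the
brace-like distributive law. -/
theorem stmt_1 (B : Type*)
    (add mul : B → B → B) (one : B) (inv : B → B) (lam : B → B → B)
    (add_assoc : ∀ a b c : B, add (add a b) c = add a (add b c))
    (mul_assoc : ∀ a b c : B, mul (mul a b) c = mul a (mul b c))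
    (one_mul : ∀ a : B, mul one a = a) (mul_one : ∀ a : B, mul a one = a)
    (inv_mul : ∀ a : B, mul (inv a) a = one) (mul_inv : ∀ a : B, mul a (inv a) = one)
    (lam_add : ∀ a x y : B, lam a (add x y) = add (lam a x) (lam a y))
    (lam_mul : ∀ a b x : B, lam (mul a b) x = lam a (lam b x))
    (dist : ∀ a b c : B, mul a (add b c) = add (mul a b) (lam a c)) :
    ∀ a b : B, ∃ c : B, mul (add one a) (add one b) = add one c :=
  stmt_1_general B add mul one lam add_assoc mul_one dist
end

section
/- Let (B,+,∘,λ) be a brace-like left semi-truss. If B has at least two elements, then the semigroup (B,+) contains no zero element; that is, there is no θ ∈ B such that θ + a = θ and a + θ = θ for all a ∈ B. -/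
/-!
If `θ` is a left zero of `+`, the distributive law at `s ∘ θ` gives `s ∘ θ = s ∘ θ + λ_s(c)`
for every `c`. As `s` runs over the group, `s ∘ θ` runs over all of `B` and `λ_s` hits every
value of `λ_1`, while `x + λ_1(y) = x + y`; hence `x + y = x` for all `x, y`. Being also a right
zero, `θ = x + θ = x` for every `x`, so `B` is a singleton.
-/

section

variable {B : Type*} {add mul : B → B → B} {one : B} {inv : B → B} {lam : B → B → B}

theorem add_lam_one_eq_add (one_mul : ∀ a : B, mul one a = a)
    (dist : ∀ a b c : B, mul a (add b c) = add (mul a b) (lam a c)) (x y : B) :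
    add x (lam one y) = add x y := by
  simpa only [one_mul] using (dist one x y).symm

theorem add_mul_left_zero_lam {θ : B} (hθ : ∀ c : B, add θ c = θ)
    (dist : ∀ a b c : B, mul a (add b c) = add (mul a b) (lam a c)) (s c : B) :
    add (mul s θ) (lam s c) = mul s θ := by
  rw [← dist, hθ]

theorem add_eq_left_of_left_zero {θ : B} (hθ : ∀ c : B, add θ c = θ)
    (mul_assoc : ∀ a b c : B, mul (mul a b) c = mul a (mul b c))
    (one_mul : ∀ a : B, mul one a = a) (mul_one : ∀ a : B, mul a one = a)
    (inv_mul : ∀ a : B, mul (inv a) a = one) (mul_inv : ∀ a : B, mul a (inv a) = one)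
    (lam_mul : ∀ a b x : B, lam (mul a b) x = lam a (lam b x))
    (dist : ∀ a b c : B, mul a (add b c) = add (mul a b) (lam a c)) (x y : B) :
    add x y = x := by
  set s := mul x (inv θ)
  have hx : mul s θ = x := by rw [mul_assoc, inv_mul, mul_one]
  have hy : lam s (lam (inv s) y) = lam one y := by rw [← lam_mul, mul_inv]
  rw [← add_lam_one_eq_add one_mul dist, ← hy, ← hx, add_mul_left_zero_lam hθ dist]

end

theorem stmt_2_general (B : Type*)
    (add mul : B → B → B) (one : B) (inv : B → B) (lam : B → B → B)
    (mul_assoc : ∀ a b c : B, mul (mul a b) c = mul a (mul b c))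
    (one_mul : ∀ a : B, mul one a = a) (mul_one : ∀ a : B, mul a one = a)
    (inv_mul : ∀ a : B, mul (inv a) a = one) (mul_inv : ∀ a : B, mul a (inv a) = one)
    (lam_mul : ∀ a b x : B, lam (mul a b) x = lam a (lam b x))
    (dist : ∀ a b c : B, mul a (add b c) = add (mul a b) (lam a c))
    (htwo : ∃ a b : B, a ≠ b) :
    ¬ ∃ θ : B, ∀ a : B, add θ a = θ ∧ add a θ = θ := by
  rintro ⟨θ, hθ⟩
  obtain ⟨a, b, hab⟩ := htwo
  have add_eq_left := add_eq_left_of_left_zero (fun c => (hθ c).1)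
    mul_assoc one_mul mul_one inv_mul mul_inv lam_mul dist
  have eq_θ : ∀ x : B, x = θ := fun x => (add_eq_left x θ).symm.trans (hθ x).2
  exact hab ((eq_θ a).trans (eq_θ b).symm)

/-- Brace-like left semi-truss: `(B,+)` a semigroup, `(B,∘)` a group with
identity `one` and inverse `inv`, and `lam : B → B → B` with each `lam a` an
endomorphism of `(B,+)`, `lam` a morphism from `(B,∘)`, and the
brace-like distributive law. -/
theorem stmt_2 (B : Type*)
    (add mul : B → B → B) (one : B) (inv : B → B) (lam : B → B → B)
    (add_assoc : ∀ a b c : B, add (add a b) c = add a (add b c))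
    (mul_assoc : ∀ a b c : B, mul (mul a b) c = mul a (mul b c))
    (one_mul : ∀ a : B, mul one a = a) (mul_one : ∀ a : B, mul a one = a)
    (inv_mul : ∀ a : B, mul (inv a) a = one) (mul_inv : ∀ a : B, mul a (inv a) = one)
    (lam_add : ∀ a x y : B, lam a (add x y) = add (lam a x) (lam a y))
    (lam_mul : ∀ a b x : B, lam (mul a b) x = lam a (lam b x))
    (dist : ∀ a b c : B, mul a (add b c) = add (mul a b) (lam a c))
    (htwo : ∃ a b : B, a ≠ b) :
    ¬ ∃ θ : B, ∀ a : B, add θ a = θ ∧ add a θ = θ :=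
  stmt_2_general B add mul one inv lam mul_assoc one_mul mul_one inv_mul mul_inv lam_mul dist htwo
end

section
/- Let (B,+,∘,λ) be a brace-like left semi-truss with multiplicative identity 1, and let P = {a + b : a, b ∈ B}. Then 1 ∈ P and P is a subgroup of the group (B,∘); in particular, for all p, q ∈ P one has p̄ ∘ q ∈ P. -/
/-! The distributive law `a ∘ (b + c) = (a ∘ b) + λ_a(c)` shows that `P` is stable under left
multiplication by arbitrary elements. As `P` contains `1 + 1`, it contains
`1 = (1 + 1)⁻¹ ∘ (1 + 1)`, and `p̄ ∘ q ∈ P` is the stability applied to `q`. -/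

section SumSet

variable {B : Type*}

def sumSet (add : B → B → B) : Set B := {x | ∃ a b : B, add a b = x}

theorem add_mem_sumSet (add : B → B → B) (a b : B) : add a b ∈ sumSet add := ⟨a, b, rfl⟩

theorem mul_mem_sumSet_of_dist {add mul lam : B → B → B}
    (dist : ∀ a b c : B, mul a (add b c) = add (mul a b) (lam a c))
    (a : B) {x : B} (hx : x ∈ sumSet add) : mul a x ∈ sumSet add := by
  obtain ⟨b, c, rfl⟩ := hx
  exact ⟨mul a b, lam a c, (dist a b c).symm⟩

theorem one_mem_sumSet_of_dist {add mul lam : B → B → B} {one : B} {inv : B → B}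
    (inv_mul : ∀ a : B, mul (inv a) a = one)
    (dist : ∀ a b c : B, mul a (add b c) = add (mul a b) (lam a c)) :
    one ∈ sumSet add := by
  rw [← inv_mul (add one one)]
  exact mul_mem_sumSet_of_dist dist _ (add_mem_sumSet add one one)

end SumSet

theorem stmt_3_general (B : Type*)
    (add mul : B → B → B) (one : B) (inv : B → B) (lam : B → B → B)
    (inv_mul : ∀ a : B, mul (inv a) a = one)
    (dist : ∀ a b c : B, mul a (add b c) = add (mul a b) (lam a c)) :
    one ∈ {x : B | ∃ a b : B, add a b = x} ∧
      ∀ p ∈ {x : B | ∃ a b : B, add a b = x}, ∀ q ∈ {x : B | ∃ a b : B, add a b = x},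
        mul (inv p) q ∈ {x : B | ∃ a b : B, add a b = x} :=
  ⟨one_mem_sumSet_of_dist inv_mul dist,
    fun p _ _ hq => mul_mem_sumSet_of_dist dist (inv p) hq⟩

/-- Brace-like left semi-truss: `(B,+)` a semigroup, `(B,∘)` a group with
identity `one` and inverse `inv`, and `lam : B → B → B` with each `lam a` an
endomorphism of `(B,+)`, `lam` a morphism from `(B,∘)`, and the
brace-like distributive law. -/
theorem stmt_3 (B : Type*)
    (add mul : B → B → B) (one : B) (inv : B → B) (lam : B → B → B)
    (add_assoc : ∀ a b c : B, add (add a b) c = add a (add b c))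
    (mul_assoc : ∀ a b c : B, mul (mul a b) c = mul a (mul b c))
    (one_mul : ∀ a : B, mul one a = a) (mul_one : ∀ a : B, mul a one = a)
    (inv_mul : ∀ a : B, mul (inv a) a = one) (mul_inv : ∀ a : B, mul a (inv a) = one)
    (lam_add : ∀ a x y : B, lam a (add x y) = add (lam a x) (lam a y))
    (lam_mul : ∀ a b x : B, lam (mul a b) x = lam a (lam b x))
    (dist : ∀ a b c : B, mul a (add b c) = add (mul a b) (lam a c)) :
    one ∈ {x : B | ∃ a b : B, add a b = x} ∧
      ∀ p ∈ {x : B | ∃ a b : B, add a b = x}, ∀ q ∈ {x : B | ∃ a b : B, add a b = x},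
        mul (inv p) q ∈ {x : B | ∃ a b : B, add a b = x} :=
  stmt_3_general B add mul one inv lam inv_mul dist
end

section
/- Let (B,+,∘,λ) be a brace-like left semi-truss. Then B = B + B; that is, every element c ∈ B can be written as c = a + b for some a, b ∈ B. -/
theorem stmt_5_general (B : Type*)
    (add mul : B → B → B) (one : B) (inv : B → B) (lam : B → B → B)
    (mul_assoc : ∀ a b c : B, mul (mul a b) c = mul a (mul b c))
    (mul_one : ∀ a : B, mul a one = a)
    (inv_mul : ∀ a : B, mul (inv a) a = one)
    (dist : ∀ a b c : B, mul a (add b c) = add (mul a b) (lam a c)) :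
    ∀ c : B, ∃ a b : B, add a b = c := by
  intro c
  -- `c = a ∘ (1 + 1)`, which the distributive law splits into a sum.
  set a := mul c (inv (add one one))
  refine ⟨mul a one, lam a one, ?_⟩
  calc add (mul a one) (lam a one) = mul a (add one one) := (dist a one one).symm
    _ = c := by rw [mul_assoc, inv_mul, mul_one]

/-- Brace-like left semi-truss: `(B,+)` a semigroup, `(B,∘)` a group with
identity `one` and inverse `inv`, and `lam : B → B → B` with each `lam a` an
endomorphism of `(B,+)`, `lam` a morphism from `(B,∘)`, and the
brace-like distributive law. -/
theorem stmt_5 (B : Type*)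
    (add mul : B → B → B) (one : B) (inv : B → B) (lam : B → B → B)
    (add_assoc : ∀ a b c : B, add (add a b) c = add a (add b c))
    (mul_assoc : ∀ a b c : B, mul (mul a b) c = mul a (mul b c))
    (one_mul : ∀ a : B, mul one a = a) (mul_one : ∀ a : B, mul a one = a)
    (inv_mul : ∀ a : B, mul (inv a) a = one) (mul_inv : ∀ a : B, mul a (inv a) = one)
    (lam_add : ∀ a x y : B, lam a (add x y) = add (lam a x) (lam a y))
    (lam_mul : ∀ a b x : B, lam (mul a b) x = lam a (lam b x))
    (dist : ∀ a b c : B, mul a (add b c) = add (mul a b) (lam a c)) :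
    ∀ c : B, ∃ a b : B, add a b = c :=
  stmt_5_general B add mul one inv lam mul_assoc mul_one inv_mul dist
end

section
/- Let (B,+,∘,λ) be a brace-like left semi-truss with B a finite set and with multiplicative identity 1. Then there exists an element z ∈ B with z + z = z such that the set z + B + z = {z + b + z : b ∈ B} coincides with {1 + b + z : b ∈ B} and is a group under +, with identity element z; that is, for every x ∈ z + B + z one has z + x = x and x + z = x, and there exists y ∈ z + B + z with x + y = z. -/
/-!
Write `T = 1 + B`. The distributive law gives `s + B = s ∘ T` for every `s`, so all left translates
`s + B` have the cardinality of `T`; for `s ∈ T` we have `s + B ⊆ T`, hence `s + B = T` by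
finiteness. Thus `T` is a finite right simple subsemigroup of `(B, +)`, so it contains an
idempotent `z`; it is a left identity on `T = z + B`, and `x + B = T ∋ z` provides inverses.
-/

open Set

namespace AddSemigroup

variable {S : Type*} [AddSemigroup S]

theorem range_add_left_subset_of_mem {e s : S} (hs : s ∈ range (e + ·)) :
    range (s + ·) ⊆ range (e + ·) := by
  rintro _ ⟨c, rfl⟩
  obtain ⟨b, rfl⟩ := hs
  exact ⟨b + c, (add_assoc e b c).symm⟩

theorem range_add_left_eq_of_mem [Finite S] {e s : S} (hs : s ∈ range (e + ·))
    (hcard : (range (e + ·)).ncard ≤ (range (s + ·)).ncard) :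
    range (s + ·) = range (e + ·) :=
  eq_of_subset_of_ncard_le (range_add_left_subset_of_mem hs) hcard

theorem exists_idempotent_mem_of_finite [Finite S] (T : Set S) (hT : T.Nonempty)
    (hadd : ∀ x ∈ T, ∀ y ∈ T, x + y ∈ T) : ∃ z ∈ T, z + z = z := by
  let : TopologicalSpace S := ⊥
  have : DiscreteTopology S := ⟨rfl⟩
  exact exists_idempotent_in_compact_add_subsemigroup (fun _ => continuous_of_discreteTopology)
    T hT T.toFinite.isCompact hadd

theorem add_eq_self_of_idempotent_of_mem {z x : S} (hzz : z + z = z) (hx : x ∈ range (z + ·)) :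
    z + x = x := by
  obtain ⟨c, rfl⟩ := hx
  rw [← add_assoc, hzz]

theorem setOf_add_add_eq_setOf_add_add {e z : S}
    (hsimple : ∀ s ∈ range (e + ·), range (s + ·) = range (e + ·)) (hz : z ∈ range (e + ·)) :
    {x | ∃ b, z + b + z = x} = {x | ∃ b, e + b + z = x} := by
  ext x
  constructor
  · rintro ⟨b, rfl⟩
    obtain ⟨c, hc⟩ : z + b ∈ range (e + ·) := range_add_left_subset_of_mem hz ⟨b, rfl⟩
    exact ⟨c, congrArg (· + z) hc⟩
  · rintro ⟨b, rfl⟩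
    obtain ⟨c, hc⟩ : e + b ∈ range (z + ·) := hsimple z hz ▸ ⟨b, rfl⟩
    exact ⟨c, congrArg (· + z) hc⟩

theorem add_eq_self_and_exists_add_eq_of_idempotent {e z x : S}
    (hsimple : ∀ s ∈ range (e + ·), range (s + ·) = range (e + ·))
    (hz : z ∈ range (e + ·)) (hzz : z + z = z) (hx : ∃ b, z + b + z = x) :
    z + x = x ∧ x + z = x ∧ ∃ y, (∃ b, z + b + z = y) ∧ x + y = z := by
  obtain ⟨b, rfl⟩ := hx
  have hxT : z + b + z ∈ range (e + ·) :=
    range_add_left_subset_of_mem hz ⟨b + z, (add_assoc z b z).symm⟩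
  have hxz : z + b + z + z = z + b + z := by rw [add_assoc _ z z, hzz]
  obtain ⟨c, hc : z + b + z + c = z⟩ : z ∈ range (z + b + z + ·) := (hsimple _ hxT).symm ▸ hz
  refine ⟨add_eq_self_of_idempotent_of_mem hzz ⟨b + z, by simp only [add_assoc]⟩, hxz,
    z + c + z, ⟨c, rfl⟩, ?_⟩
  rw [← add_assoc, ← add_assoc, hxz, hc, hzz]

theorem exists_idempotent_of_ncard_range_add_left_le [Finite S] (e : S)
    (hcard : ∀ s : S, (range (e + ·)).ncard ≤ (range (s + ·)).ncard) :
    ∃ z : S, z + z = z ∧ {x | ∃ b, z + b + z = x} = {x | ∃ b, e + b + z = x} ∧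
      ∀ x, (∃ b, z + b + z = x) →
        z + x = x ∧ x + z = x ∧ ∃ y, (∃ b, z + b + z = y) ∧ x + y = z := by
  have hsimple : ∀ s ∈ range (e + ·), range (s + ·) = range (e + ·) :=
    fun s hs => range_add_left_eq_of_mem hs (hcard s)
  obtain ⟨z, hz, hzz⟩ := exists_idempotent_mem_of_finite (range (e + ·)) ⟨e + e, e, rfl⟩
    fun x hx y _ => range_add_left_subset_of_mem hx ⟨y, rfl⟩
  exact ⟨z, hzz, setOf_add_add_eq_setOf_add_add hsimple hz,
    fun _ hx => add_eq_self_and_exists_add_eq_of_idempotent hsimple hz hzz hx⟩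

end AddSemigroup

theorem range_add_left_eq_image_mul_left {B : Type*} [Add B] [Group B] (lam : B → B → B)
    (lam_mul : ∀ a b x : B, lam (a * b) x = lam a (lam b x))
    (dist : ∀ a b c : B, a * (b + c) = a * b + lam a c) (s : B) :
    range (s + ·) = (s * ·) '' range (1 + ·) := by
  have add_lam_one (a c : B) : a + lam 1 c = a + c := by simpa using (dist 1 a c).symm
  ext w
  constructor
  · rintro ⟨c, rfl⟩
    refine ⟨1 + lam s⁻¹ c, ⟨_, rfl⟩, ?_⟩
    simp only [dist, mul_one, ← lam_mul, mul_inv_cancel, add_lam_one]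
  · rintro ⟨_, ⟨b, rfl⟩, rfl⟩
    exact ⟨lam s b, by simp only [dist, mul_one]⟩

theorem stmt_6_general (B : Type*) [Finite B]
    (add mul : B → B → B) (one : B) (inv : B → B) (lam : B → B → B)
    (add_assoc : ∀ a b c : B, add (add a b) c = add a (add b c))
    (mul_assoc : ∀ a b c : B, mul (mul a b) c = mul a (mul b c))
    (one_mul : ∀ a : B, mul one a = a)
    (inv_mul : ∀ a : B, mul (inv a) a = one)
    (lam_mul : ∀ a b x : B, lam (mul a b) x = lam a (lam b x))
    (dist : ∀ a b c : B, mul a (add b c) = add (mul a b) (lam a c)) :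
    ∃ z : B, add z z = z ∧
      {x : B | ∃ b : B, add (add z b) z = x} = {x : B | ∃ b : B, add (add one b) z = x} ∧
      ∀ x : B, (∃ b : B, add (add z b) z = x) →
        add z x = x ∧ add x z = x ∧
          ∃ y : B, (∃ b : B, add (add z b) z = y) ∧ add x y = z := by
  let : AddSemigroup B := { add := add, add_assoc := add_assoc }
  let : Mul B := ⟨mul⟩
  let : One B := ⟨one⟩
  let : Inv B := ⟨inv⟩
  let : Group B := Group.ofLeftAxioms mul_assoc one_mul inv_mul
  refine AddSemigroup.exists_idempotent_of_ncard_range_add_left_le (1 : B) fun s => ?_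
  rw [range_add_left_eq_image_mul_left lam lam_mul dist s,
    ncard_image_of_injective _ (mul_right_injective s)]

/-- Brace-like left semi-truss: `(B,+)` a semigroup, `(B,∘)` a group with
identity `one` and inverse `inv`, and `lam : B → B → B` with each `lam a` an
endomorphism of `(B,+)`, `lam` a morphism from `(B,∘)`, and the
brace-like distributive law. -/
theorem stmt_6 (B : Type*) [Finite B]
    (add mul : B → B → B) (one : B) (inv : B → B) (lam : B → B → B)
    (add_assoc : ∀ a b c : B, add (add a b) c = add a (add b c))
    (mul_assoc : ∀ a b c : B, mul (mul a b) c = mul a (mul b c))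
    (one_mul : ∀ a : B, mul one a = a) (mul_one : ∀ a : B, mul a one = a)
    (inv_mul : ∀ a : B, mul (inv a) a = one) (mul_inv : ∀ a : B, mul a (inv a) = one)
    (lam_add : ∀ a x y : B, lam a (add x y) = add (lam a x) (lam a y))
    (lam_mul : ∀ a b x : B, lam (mul a b) x = lam a (lam b x))
    (dist : ∀ a b c : B, mul a (add b c) = add (mul a b) (lam a c)) :
    ∃ z : B, add z z = z ∧
      {x : B | ∃ b : B, add (add z b) z = x} = {x : B | ∃ b : B, add (add one b) z = x} ∧
      ∀ x : B, (∃ b : B, add (add z b) z = x) →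
        add z x = x ∧ add x z = x ∧
          ∃ y : B, (∃ b : B, add (add z b) z = y) ∧ add x y = z :=
  stmt_6_general B add mul one inv lam add_assoc mul_assoc one_mul inv_mul lam_mul dist
end

section
/- Let (B,+,∘,λ) be a brace-like left semi-truss and let z ∈ B be an idempotent of (B,+) (z + z = z) such that the set z + B + z = {z + b + z : b ∈ B} is a group under + with identity z (i.e., z + x = x = x + z for all x ∈ z + B + z, and every x ∈ z + B + z has an element y ∈ z + B + z with x + y = z = y + x). Then for any c ∈ B there exists b ∈ B with c = c + z + b; in particular B = B + z + B. -/
/-!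
With `e = z ∘ c̄` we have `e ∘ c = z` and `e ∘ (c + z) = z + λ_e z`. The element `z + λ_e z + z`
of the group `z + B + z` has an inverse `y`, so `(z + λ_e z) + (z + y) = z`. Applying `ē ∘ -`
to `z = e ∘ (c + z) + (z + y)` and distributing gives `c = c + z + λ_ē (z + y)`.
-/

theorem inv_mul_add_mul {B : Type*} (add mul : B → B → B) (one : B) (inv : B → B)
    (lam : B → B → B)
    (mul_assoc : ∀ a b c : B, mul (mul a b) c = mul a (mul b c))
    (one_mul : ∀ a : B, mul one a = a)
    (inv_mul : ∀ a : B, mul (inv a) a = one)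
    (dist : ∀ a b c : B, mul a (add b c) = add (mul a b) (lam a c))
    (e a d : B) :
    mul (inv e) (add (mul e a) d) = add a (lam (inv e) d) := by
  rw [dist, ← mul_assoc, inv_mul, one_mul]

theorem exists_add_add_eq_of_exists_right_inv {B : Type*} (add : B → B → B)
    (add_assoc : ∀ a b c : B, add (add a b) c = add a (add b c)) (z : B)
    (hinv : ∀ b : B, ∃ y : B, add (add (add z b) z) y = z) (w : B) :
    ∃ y : B, add (add z w) y = z := by
  obtain ⟨y, hy⟩ := hinv w
  exact ⟨add z y, by rwa [← add_assoc]⟩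

theorem exists_eq_add_add {B : Type*} (add mul : B → B → B) (one : B) (inv : B → B)
    (lam : B → B → B)
    (mul_assoc : ∀ a b c : B, mul (mul a b) c = mul a (mul b c))
    (one_mul : ∀ a : B, mul one a = a) (mul_one : ∀ a : B, mul a one = a)
    (inv_mul : ∀ a : B, mul (inv a) a = one)
    (dist : ∀ a b c : B, mul a (add b c) = add (mul a b) (lam a c))
    (z : B) (hright : ∀ w : B, ∃ y : B, add (add z w) y = z) (c : B) :
    ∃ b : B, c = add (add c z) b := by
  set e := mul z (inv c)
  have hec : mul e c = z := by rw [mul_assoc, inv_mul, mul_one]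
  have he_add : mul e (add c z) = add z (lam e z) := by rw [dist, hec]
  obtain ⟨y, hy⟩ := hright (lam e z)
  refine ⟨lam (inv e) y, ?_⟩
  calc c = mul (inv e) (mul e c) := by rw [← mul_assoc, inv_mul, one_mul]
    _ = mul (inv e) (add (mul e (add c z)) y) := by rw [hec, he_add, hy]
    _ = add (add c z) (lam (inv e) y) :=
      inv_mul_add_mul add mul one inv lam mul_assoc one_mul inv_mul dist e _ y

theorem stmt_7_general (B : Type*)
    (add mul : B → B → B) (one : B) (inv : B → B) (lam : B → B → B)
    (add_assoc : ∀ a b c : B, add (add a b) c = add a (add b c))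
    (mul_assoc : ∀ a b c : B, mul (mul a b) c = mul a (mul b c))
    (one_mul : ∀ a : B, mul one a = a) (mul_one : ∀ a : B, mul a one = a)
    (inv_mul : ∀ a : B, mul (inv a) a = one)
    (dist : ∀ a b c : B, mul a (add b c) = add (mul a b) (lam a c))
    (z : B)
    (hzinv : ∀ x : B, (∃ b : B, add (add z b) z = x) →
      ∃ y : B, (∃ b : B, add (add z b) z = y) ∧ add x y = z ∧ add y x = z) :
    (∀ c : B, ∃ b : B, c = add (add c z) b) ∧
      ∀ c : B, ∃ x y : B, c = add (add x z) y := by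
  have hinv (b : B) : ∃ y : B, add (add (add z b) z) y = z := by
    obtain ⟨y, -, hy, -⟩ := hzinv _ ⟨b, rfl⟩
    exact ⟨y, hy⟩
  have key := exists_eq_add_add add mul one inv lam mul_assoc one_mul mul_one inv_mul dist z
    (exists_add_add_eq_of_exists_right_inv add add_assoc z hinv)
  exact ⟨key, fun c => ⟨c, key c⟩⟩

/-- Brace-like left semi-truss: `(B,+)` a semigroup, `(B,∘)` a group with
identity `one` and inverse `inv`, and `lam : B → B → B` with each `lam a` an
endomorphism of `(B,+)`, `lam` a morphism from `(B,∘)`, and the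
brace-like distributive law. -/
theorem stmt_7 (B : Type*)
    (add mul : B → B → B) (one : B) (inv : B → B) (lam : B → B → B)
    (add_assoc : ∀ a b c : B, add (add a b) c = add a (add b c))
    (mul_assoc : ∀ a b c : B, mul (mul a b) c = mul a (mul b c))
    (one_mul : ∀ a : B, mul one a = a) (mul_one : ∀ a : B, mul a one = a)
    (inv_mul : ∀ a : B, mul (inv a) a = one) (mul_inv : ∀ a : B, mul a (inv a) = one)
    (lam_add : ∀ a x y : B, lam a (add x y) = add (lam a x) (lam a y))
    (lam_mul : ∀ a b x : B, lam (mul a b) x = lam a (lam b x))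
    (dist : ∀ a b c : B, mul a (add b c) = add (mul a b) (lam a c))
    (z : B) (hz : add z z = z)
    (hzid : ∀ x : B, (∃ b : B, add (add z b) z = x) → add z x = x ∧ add x z = x)
    (hzinv : ∀ x : B, (∃ b : B, add (add z b) z = x) →
      ∃ y : B, (∃ b : B, add (add z b) z = y) ∧ add x y = z ∧ add y x = z) :
    (∀ c : B, ∃ b : B, c = add (add c z) b) ∧
      ∀ c : B, ∃ x y : B, c = add (add x z) y :=
  stmt_7_general B add mul one inv lam add_assoc mul_assoc one_mul mul_one inv_mul dist z hzinv
end

section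
/- Let (B,+,∘,λ) be a brace-like left semi-truss and let z ∈ B be an idempotent of (B,+) (z + z = z) such that the set z + B + z = {z + b + z : b ∈ B} is a group under + with identity z (i.e., z + x = x = x + z for all x ∈ z + B + z, and every x ∈ z + B + z has an element y ∈ z + B + z with x + y = z = y + x). Then the semigroup (B,+) is simple, i.e., for every b ∈ B one has B + b + B = B (every c ∈ B can be written c = x + b + y with x, y ∈ B), and z is a primitive idempotent of (B,+): for every idempotent e of (B,+) with e + z = e and z + e = e, one has e = z. -/
/-!
Write `G := z + B + z`. Since `z` is the identity of the group `G`, for every `t` the inverse `g` of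
`z + t + z` in `G` gives `z = g + t + z`; thus `z ∈ B + t + B` for all `t`. So `(B,+)` is simple
as soon as every `c` lies in `B + z + B`. For this write `c = a ∘ z` with `a = c ∘ z̄`. The
distributive law at `a = 1` shows that `λ_1` acts trivially behind a summand, hence
`a ∘ (p + λ_ā q) = a ∘ p + q`; applied to `z = g + λ_ā z + z` it gives
`c = (a ∘ g) + z + λ_a z`. Primitivity: an idempotent `e` with `e + z = e = z + e` lies in `G`,
and the only idempotent of a group is its identity.
-/

section CornerGroup

variable {S : Type*} [AddSemigroup S] {z : S}

theorem exists_add_add_eq_of_cornerGroup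
    (hzid : ∀ x : S, (∃ b : S, z + b + z = x) → z + x = x ∧ x + z = x)
    (hzinv : ∀ x : S, (∃ b : S, z + b + z = x) →
      ∃ y : S, (∃ b : S, z + b + z = y) ∧ x + y = z ∧ y + x = z)
    (t : S) : ∃ g : S, g + t + z = z := by
  obtain ⟨g, hg, -, hgt⟩ := hzinv (z + t + z) ⟨t, rfl⟩
  refine ⟨g, ?_⟩
  calc g + t + z = (g + z) + t + z := by rw [(hzid g hg).2]
    _ = g + (z + t + z) := by simp only [add_assoc]
    _ = z := hgt

theorem eq_of_idempotent_of_cornerGroup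
    (hzinv : ∀ x : S, (∃ b : S, z + b + z = x) →
      ∃ y : S, (∃ b : S, z + b + z = y) ∧ x + y = z ∧ y + x = z)
    {e : S} (hee : e + e = e) (hez : e + z = e) (hze : z + e = e) : e = z := by
  obtain ⟨e', -, -, he'e⟩ := hzinv e ⟨e, by rw [hze, hez]⟩
  calc e = e' + e + e := by rw [he'e, hze]
    _ = z := by rw [add_assoc, hee, he'e]

end CornerGroup

section SemiTruss

variable {B : Type*} [AddSemigroup B] [Group B] {lam : B → B → B}

theorem mul_add_lam_inv (lam_mul : ∀ a b x : B, lam (a * b) x = lam a (lam b x))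
    (dist : ∀ a b c : B, a * (b + c) = a * b + lam a c) (a p q : B) :
    a * (p + lam a⁻¹ q) = a * p + q := by
  have lam_one : ∀ x y : B, x + lam 1 y = x + y := fun x y => by
    simpa only [one_mul] using (dist 1 x y).symm
  rw [dist, ← lam_mul, mul_inv_cancel, lam_one]

theorem exists_eq_add_add_of_cornerGroup (lam_mul : ∀ a b x : B, lam (a * b) x = lam a (lam b x))
    (dist : ∀ a b c : B, a * (b + c) = a * b + lam a c) {z : B}
    (hzid : ∀ x : B, (∃ b : B, z + b + z = x) → z + x = x ∧ x + z = x)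
    (hzinv : ∀ x : B, (∃ b : B, z + b + z = x) →
      ∃ y : B, (∃ b : B, z + b + z = y) ∧ x + y = z ∧ y + x = z)
    (c : B) : ∃ x y : B, c = x + z + y := by
  set a := c * z⁻¹
  obtain ⟨g, hg⟩ := exists_add_add_eq_of_cornerGroup hzid hzinv (lam a⁻¹ z)
  refine ⟨a * g, lam a z, ?_⟩
  calc c = a * z := by rw [inv_mul_cancel_right]
    _ = a * (g + lam a⁻¹ z + z) := by rw [hg]
    _ = a * g + z + lam a z := by rw [dist, mul_add_lam_inv lam_mul dist]

end SemiTruss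

theorem stmt_8_general (B : Type*)
    (add mul : B → B → B) (one : B) (inv : B → B) (lam : B → B → B)
    (add_assoc : ∀ a b c : B, add (add a b) c = add a (add b c))
    (mul_assoc : ∀ a b c : B, mul (mul a b) c = mul a (mul b c))
    (one_mul : ∀ a : B, mul one a = a)
    (inv_mul : ∀ a : B, mul (inv a) a = one)
    (lam_mul : ∀ a b x : B, lam (mul a b) x = lam a (lam b x))
    (dist : ∀ a b c : B, mul a (add b c) = add (mul a b) (lam a c))
    (z : B)
    (hzid : ∀ x : B, (∃ b : B, add (add z b) z = x) → add z x = x ∧ add x z = x)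
    (hzinv : ∀ x : B, (∃ b : B, add (add z b) z = x) →
      ∃ y : B, (∃ b : B, add (add z b) z = y) ∧ add x y = z ∧ add y x = z) :
    (∀ b c : B, ∃ x y : B, c = add (add x b) y) ∧
      ∀ e : B, add e e = e → add e z = e → add z e = e → e = z := by
  let : AddSemigroup B := { add := add, add_assoc := add_assoc }
  let : Mul B := ⟨mul⟩
  let : One B := ⟨one⟩
  let : Inv B := ⟨inv⟩
  let : Group B := Group.ofLeftAxioms mul_assoc one_mul inv_mul
  refine ⟨fun b c => ?_, fun e => eq_of_idempotent_of_cornerGroup hzinv⟩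
  obtain ⟨x, y, hc⟩ := exists_eq_add_add_of_cornerGroup lam_mul dist hzid hzinv c
  obtain ⟨g, hg⟩ := exists_add_add_eq_of_cornerGroup hzid hzinv b
  refine ⟨x + g, z + y, ?_⟩
  calc c = x + (g + b + z) + y := by rw [hc, hg]
    _ = x + g + b + (z + y) := by simp only [_root_.add_assoc]

/-- Brace-like left semi-truss: `(B,+)` a semigroup, `(B,∘)` a group with
identity `one` and inverse `inv`, and `lam : B → B → B` with each `lam a` an
endomorphism of `(B,+)`, `lam` a morphism from `(B,∘)`, and the
brace-like distributive law. -/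
theorem stmt_8 (B : Type*)
    (add mul : B → B → B) (one : B) (inv : B → B) (lam : B → B → B)
    (add_assoc : ∀ a b c : B, add (add a b) c = add a (add b c))
    (mul_assoc : ∀ a b c : B, mul (mul a b) c = mul a (mul b c))
    (one_mul : ∀ a : B, mul one a = a) (mul_one : ∀ a : B, mul a one = a)
    (inv_mul : ∀ a : B, mul (inv a) a = one) (mul_inv : ∀ a : B, mul a (inv a) = one)
    (lam_add : ∀ a x y : B, lam a (add x y) = add (lam a x) (lam a y))
    (lam_mul : ∀ a b x : B, lam (mul a b) x = lam a (lam b x))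
    (dist : ∀ a b c : B, mul a (add b c) = add (mul a b) (lam a c))
    (z : B) (hz : add z z = z)
    (hzid : ∀ x : B, (∃ b : B, add (add z b) z = x) → add z x = x ∧ add x z = x)
    (hzinv : ∀ x : B, (∃ b : B, add (add z b) z = x) →
      ∃ y : B, (∃ b : B, add (add z b) z = y) ∧ add x y = z ∧ add y x = z) :
    (∀ b c : B, ∃ x y : B, c = add (add x b) y) ∧
      ∀ e : B, add e e = e → add e z = e → add z e = e → e = z :=
  stmt_8_general B add mul one inv lam add_assoc mul_assoc one_mul inv_mul lam_mul dist z hzid hzinv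
end

section
/- Let (B,+,∘,ι) be an almost left semi-brace and define λ_a(b) := a ∘ (ι(a) + b) for a, b ∈ B. Then each λ_a is an endomorphism of the semigroup (B,+), i.e., λ_a(x + y) = λ_a(x) + λ_a(y) for all x, y ∈ B, and λ is a homomorphism from (B,∘), i.e., λ_{a∘b}(x) = λ_a(λ_b(x)) for all a, b, x ∈ B. -/
theorem stmt_9_general (B : Type*)
    (add mul : B → B → B) (one : B) (inv : B → B) (iota : B → B)
    (add_assoc : ∀ a b c : B, add (add a b) c = add a (add b c))
    (mul_assoc : ∀ a b c : B, mul (mul a b) c = mul a (mul b c))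
    (one_mul : ∀ a : B, mul one a = a)
    (mul_inv : ∀ a : B, mul a (inv a) = one)
    (iota_mul : ∀ a b : B, iota (mul a b) = mul (inv b) (iota a))
    (dist : ∀ a b c : B, mul a (add b c) = add (mul a b) (mul a (add (iota a) c)))
    (lam : B → B → B) (hlam : ∀ a b : B, lam a b = mul a (add (iota a) b)) :
    (∀ a x y : B, lam a (add x y) = add (lam a x) (lam a y)) ∧
      ∀ a b x : B, lam (mul a b) x = lam a (lam b x) := by
  refine ⟨fun a x y => ?_, fun a b x => ?_⟩
  · rw [hlam, hlam, hlam, ← add_assoc, dist]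
  · calc lam (mul a b) x
        = mul a (mul b (add (mul (inv b) (iota a)) x)) := by rw [hlam, iota_mul, mul_assoc]
      _ = mul a (add (iota a) (mul b (add (iota b) x))) := by
          rw [dist b, ← mul_assoc, mul_inv, one_mul]
      _ = lam a (lam b x) := by rw [hlam, hlam]

/-- Almost left semi-brace: `(B,+)` a semigroup, `(B,∘)` a group with identity
`one` and inverse `inv`, and `iota : B → B` with `ι(a∘b) = b̄ ∘ ι(a)` and
`a ∘ (b + c) = (a ∘ b) + a ∘ (ι(a) + c)`. -/
theorem stmt_9 (B : Type*)
    (add mul : B → B → B) (one : B) (inv : B → B) (iota : B → B)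
    (add_assoc : ∀ a b c : B, add (add a b) c = add a (add b c))
    (mul_assoc : ∀ a b c : B, mul (mul a b) c = mul a (mul b c))
    (one_mul : ∀ a : B, mul one a = a) (mul_one : ∀ a : B, mul a one = a)
    (inv_mul : ∀ a : B, mul (inv a) a = one) (mul_inv : ∀ a : B, mul a (inv a) = one)
    (iota_mul : ∀ a b : B, iota (mul a b) = mul (inv b) (iota a))
    (dist : ∀ a b c : B, mul a (add b c) = add (mul a b) (mul a (add (iota a) c)))
    (lam : B → B → B) (hlam : ∀ a b : B, lam a b = mul a (add (iota a) b)) :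
    (∀ a x y : B, lam a (add x y) = add (lam a x) (lam a y)) ∧
      ∀ a b x : B, lam (mul a b) x = lam a (lam b x) :=
  stmt_9_general B add mul one inv iota add_assoc mul_assoc one_mul mul_inv iota_mul dist lam hlam
end

section
/- Let (B,+,∘,ι) be an almost left semi-brace and define λ_a(b) := a ∘ (ι(a) + b) for a, b ∈ B. Then for every a ∈ B and every idempotent e of (B,+) (i.e., e + e = e), the element λ_a(e) is an idempotent of (B,+) and satisfies ι(1) + λ_a(e) = λ_a(e); that is, λ_a maps idempotents of (B,+) into the idempotents lying in the set ι(1) + B. -/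
/-!
Both identities are instances of the distributive law
`a ∘ (b + c) = (a ∘ b) + a ∘ (ι(a) + c)`: taking `b = ι(a) + e`, `c = e` gives idempotency of
`λ_a(e)` because `(ι(a) + e) + e = ι(a) + e`; taking `b = ι(a)`, `c = e` gives the absorption
`ι(1) + λ_a(e) = λ_a(e)` because `a ∘ ι(a) = ι(1)`.
-/

section AlmostLeftSemiBrace

variable {B : Type*} {add mul : B → B → B} {iota : B → B}

theorem mul_iota_eq_iota_one {one : B} {inv : B → B}
    (mul_assoc : ∀ a b c : B, mul (mul a b) c = mul a (mul b c))
    (one_mul : ∀ a : B, mul one a = a) (mul_inv : ∀ a : B, mul a (inv a) = one)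
    (iota_mul : ∀ a b : B, iota (mul a b) = mul (inv b) (iota a)) (a : B) :
    mul a (iota a) = iota one :=
  calc mul a (iota a) = mul a (iota (mul one a)) := by rw [one_mul]
    _ = mul a (mul (inv a) (iota one)) := by rw [iota_mul]
    _ = iota one := by rw [← mul_assoc, mul_inv, one_mul]

theorem add_self_mul_iota_add_of_add_self
    (add_assoc : ∀ a b c : B, add (add a b) c = add a (add b c))
    (dist : ∀ a b c : B, mul a (add b c) = add (mul a b) (mul a (add (iota a) c)))
    (a : B) {e : B} (he : add e e = e) :
    add (mul a (add (iota a) e)) (mul a (add (iota a) e)) = mul a (add (iota a) e) := by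
  rw [← dist, add_assoc, he]

end AlmostLeftSemiBrace

theorem stmt_10_general (B : Type*)
    (add mul : B → B → B) (one : B) (inv : B → B) (iota : B → B)
    (add_assoc : ∀ a b c : B, add (add a b) c = add a (add b c))
    (mul_assoc : ∀ a b c : B, mul (mul a b) c = mul a (mul b c))
    (one_mul : ∀ a : B, mul one a = a)
    (mul_inv : ∀ a : B, mul a (inv a) = one)
    (iota_mul : ∀ a b : B, iota (mul a b) = mul (inv b) (iota a))
    (dist : ∀ a b c : B, mul a (add b c) = add (mul a b) (mul a (add (iota a) c)))
    (lam : B → B → B) (hlam : ∀ a b : B, lam a b = mul a (add (iota a) b)) :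
    ∀ a e : B, add e e = e →
      add (lam a e) (lam a e) = lam a e ∧ add (iota one) (lam a e) = lam a e := by
  intro a e he
  rw [hlam]
  refine ⟨add_self_mul_iota_add_of_add_self add_assoc dist a he, ?_⟩
  rw [← mul_iota_eq_iota_one mul_assoc one_mul mul_inv iota_mul a, ← dist]

/-- Almost left semi-brace: `(B,+)` a semigroup, `(B,∘)` a group with identity
`one` and inverse `inv`, and `iota : B → B` with `ι(a∘b) = b̄ ∘ ι(a)` and
`a ∘ (b + c) = (a ∘ b) + a ∘ (ι(a) + c)`. -/
theorem stmt_10 (B : Type*)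
    (add mul : B → B → B) (one : B) (inv : B → B) (iota : B → B)
    (add_assoc : ∀ a b c : B, add (add a b) c = add a (add b c))
    (mul_assoc : ∀ a b c : B, mul (mul a b) c = mul a (mul b c))
    (one_mul : ∀ a : B, mul one a = a) (mul_one : ∀ a : B, mul a one = a)
    (inv_mul : ∀ a : B, mul (inv a) a = one) (mul_inv : ∀ a : B, mul a (inv a) = one)
    (iota_mul : ∀ a b : B, iota (mul a b) = mul (inv b) (iota a))
    (dist : ∀ a b c : B, mul a (add b c) = add (mul a b) (mul a (add (iota a) c)))
    (lam : B → B → B) (hlam : ∀ a b : B, lam a b = mul a (add (iota a) b)) :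
    ∀ a e : B, add e e = e →
      add (lam a e) (lam a e) = lam a e ∧ add (iota one) (lam a e) = lam a e :=
  stmt_10_general B add mul one inv iota add_assoc mul_assoc one_mul mul_inv iota_mul dist lam hlam
end

section
/- Let (B,+,∘,ι) be an almost left semi-brace. Then for all a, b ∈ B one has a + b = a + ι(1) + b. -/
theorem stmt_11_general (B : Type*)
    (add mul : B → B → B) (one : B) (iota : B → B)
    (add_assoc : ∀ a b c : B, add (add a b) c = add a (add b c))
    (one_mul : ∀ a : B, mul one a = a)
    (dist : ∀ a b c : B, mul a (add b c) = add (mul a b) (mul a (add (iota a) c))) :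
    ∀ a b : B, add a b = add (add a (iota one)) b := by
  intro a b
  calc add a b = mul one (add a b) := (one_mul _).symm
    _ = add a (add (iota one) b) := by rw [dist, one_mul, one_mul]
    _ = add (add a (iota one)) b := (add_assoc _ _ _).symm

/-- Almost left semi-brace: `(B,+)` a semigroup, `(B,∘)` a group with identity
`one` and inverse `inv`, and `iota : B → B` with `ι(a∘b) = b̄ ∘ ι(a)` and
`a ∘ (b + c) = (a ∘ b) + a ∘ (ι(a) + c)`. -/
theorem stmt_11 (B : Type*)
    (add mul : B → B → B) (one : B) (inv : B → B) (iota : B → B)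
    (add_assoc : ∀ a b c : B, add (add a b) c = add a (add b c))
    (mul_assoc : ∀ a b c : B, mul (mul a b) c = mul a (mul b c))
    (one_mul : ∀ a : B, mul one a = a) (mul_one : ∀ a : B, mul a one = a)
    (inv_mul : ∀ a : B, mul (inv a) a = one) (mul_inv : ∀ a : B, mul a (inv a) = one)
    (iota_mul : ∀ a b : B, iota (mul a b) = mul (inv b) (iota a))
    (dist : ∀ a b c : B, mul a (add b c) = add (mul a b) (mul a (add (iota a) c))) :
    ∀ a b : B, add a b = add (add a (iota one)) b :=
  stmt_11_general B add mul one iota add_assoc one_mul dist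
end

section
/- Let (B,+,∘,ι) be an almost left semi-brace. Then the map ι is bijective, and ι(a) = ā ∘ ι(1) for every a ∈ B. -/
/-! Putting `a = 1` in `ι(a ∘ b) = b̄ ∘ ι(a)` gives `ι(b) = b̄ ∘ ι(1)`. Hence `ι` is inversion
followed by right multiplication by `ι(1)`, a composite of two bijections of the group `(B, ∘)`. -/

theorem iota_eq_inv_mul_iota_one {B : Type*} (mul : B → B → B) (one : B) (inv iota : B → B)
    (one_mul : ∀ a : B, mul one a = a)
    (iota_mul : ∀ a b : B, iota (mul a b) = mul (inv b) (iota a)) (a : B) :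
    iota a = mul (inv a) (iota one) := by
  rw [← iota_mul one a, one_mul]

theorem bijective_inv_mul_of_left_axioms {B : Type*} (mul : B → B → B) (one : B) (inv : B → B)
    (mul_assoc : ∀ a b c : B, mul (mul a b) c = mul a (mul b c))
    (one_mul : ∀ a : B, mul one a = a) (inv_mul : ∀ a : B, mul (inv a) a = one) (c : B) :
    Function.Bijective fun a => mul (inv a) c := by
  let : Mul B := ⟨mul⟩
  let : One B := ⟨one⟩
  let : Inv B := ⟨inv⟩
  let : Group B := Group.ofLeftAxioms mul_assoc one_mul inv_mul
  exact ((Equiv.inv B).trans (Equiv.mulRight c)).bijective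

theorem stmt_12_general (B : Type*)
    (mul : B → B → B) (one : B) (inv : B → B) (iota : B → B)
    (mul_assoc : ∀ a b c : B, mul (mul a b) c = mul a (mul b c))
    (one_mul : ∀ a : B, mul one a = a)
    (inv_mul : ∀ a : B, mul (inv a) a = one)
    (iota_mul : ∀ a b : B, iota (mul a b) = mul (inv b) (iota a)) :
    Function.Bijective iota ∧ ∀ a : B, iota a = mul (inv a) (iota one) := by
  have iota_eq := iota_eq_inv_mul_iota_one mul one inv iota one_mul iota_mul
  refine ⟨?_, iota_eq⟩
  rw [funext iota_eq]
  exact bijective_inv_mul_of_left_axioms mul one inv mul_assoc one_mul inv_mul (iota one)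

/-- Almost left semi-brace: `(B,+)` a semigroup, `(B,∘)` a group with identity
`one` and inverse `inv`, and `iota : B → B` with `ι(a∘b) = b̄ ∘ ι(a)` and
`a ∘ (b + c) = (a ∘ b) + a ∘ (ι(a) + c)`. -/
theorem stmt_12 (B : Type*)
    (add mul : B → B → B) (one : B) (inv : B → B) (iota : B → B)
    (add_assoc : ∀ a b c : B, add (add a b) c = add a (add b c))
    (mul_assoc : ∀ a b c : B, mul (mul a b) c = mul a (mul b c))
    (one_mul : ∀ a : B, mul one a = a) (mul_one : ∀ a : B, mul a one = a)
    (inv_mul : ∀ a : B, mul (inv a) a = one) (mul_inv : ∀ a : B, mul a (inv a) = one)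
    (iota_mul : ∀ a b : B, iota (mul a b) = mul (inv b) (iota a))
    (dist : ∀ a b c : B, mul a (add b c) = add (mul a b) (mul a (add (iota a) c))) :
    Function.Bijective iota ∧ ∀ a : B, iota a = mul (inv a) (iota one) :=
  stmt_12_general B mul one inv iota mul_assoc one_mul inv_mul iota_mul
end

section
/- Let (B,+,∘,ι) be an almost left semi-brace, so that ι is bijective, and define a ⊕ b := ι⁻¹(ι(a) + ι(b)) and a ∘ᵒᵖ b := b ∘ a for a, b ∈ B. Then (B,⊕,∘ᵒᵖ) is a left semi-brace: ⊕ is associative, (B,∘ᵒᵖ) is a group, and a ∘ᵒᵖ (b ⊕ c) = (a ∘ᵒᵖ b) ⊕ (a ∘ᵒᵖ (ā ⊕ c)) for all a, b, c ∈ B, where ā denotes the inverse of a in (B,∘). -/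
/-!
Transporting `+` along the bijection `ι` makes `⊕` associative, and `∘ᵒᵖ` is the opposite group.
For the distributive law, the rule `ι(x ∘ a) = ā ∘ ι(x)` turns right multiplication by `a` into
left multiplication by `ā`; after applying `ι` to both sides, the law is the almost-semi-brace
distributivity at `ā`.
-/

theorem assoc_of_leftInverse {α β : Type*} (f : α → β) (g : β → α) (hfg : Function.LeftInverse f g)
    (add : β → β → β) (add_assoc : ∀ x y z : β, add (add x y) z = add x (add y z)) (a b c : α) :
    g (add (f (g (add (f a) (f b)))) (f c)) = g (add (f a) (f (g (add (f b) (f c))))) := by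
  rw [hfg, hfg, add_assoc]

section AlmostLeftSemiBrace

variable {B : Type*} {add mul : B → B → B} {inv iota iotaInv : B → B}

theorem iota_mul_iotaInv (iota_mul : ∀ a b : B, iota (mul a b) = mul (inv b) (iota a))
    (hinv : Function.LeftInverse iota iotaInv) (z a : B) :
    iota (mul (iotaInv z) a) = mul (inv a) z := by
  rw [iota_mul, hinv]

theorem iota_mul_iotaInv_add (iota_mul : ∀ a b : B, iota (mul a b) = mul (inv b) (iota a))
    (dist : ∀ a b c : B, mul a (add b c) = add (mul a b) (mul a (add (iota a) c)))
    (hinv : Function.LeftInverse iota iotaInv) (a b c : B) :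
    iota (mul (iotaInv (add (iota b) (iota c))) a) =
      add (iota (mul b a)) (iota (mul (iotaInv (add (iota (inv a)) (iota c))) a)) :=
  calc iota (mul (iotaInv (add (iota b) (iota c))) a)
      _ = mul (inv a) (add (iota b) (iota c)) := iota_mul_iotaInv iota_mul hinv _ a
      _ = add (mul (inv a) (iota b)) (mul (inv a) (add (iota (inv a)) (iota c))) := dist _ _ _
      _ = add (iota (mul b a)) (iota (mul (iotaInv (add (iota (inv a)) (iota c))) a)) := by
        rw [iota_mul, iota_mul_iotaInv iota_mul hinv]

end AlmostLeftSemiBrace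

/-- Almost left semi-brace: `(B,+)` a semigroup, `(B,∘)` a group with identity
`one` and inverse `inv`, and `iota : B → B` with `ι(a∘b) = b̄ ∘ ι(a)` and
`a ∘ (b + c) = (a ∘ b) + a ∘ (ι(a) + c)`. -/
theorem stmt_14 (B : Type*)
    (add mul : B → B → B) (one : B) (inv : B → B) (iota : B → B)
    (add_assoc : ∀ a b c : B, add (add a b) c = add a (add b c))
    (mul_assoc : ∀ a b c : B, mul (mul a b) c = mul a (mul b c))
    (one_mul : ∀ a : B, mul one a = a) (mul_one : ∀ a : B, mul a one = a)
    (inv_mul : ∀ a : B, mul (inv a) a = one) (mul_inv : ∀ a : B, mul a (inv a) = one)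
    (iota_mul : ∀ a b : B, iota (mul a b) = mul (inv b) (iota a))
    (dist : ∀ a b c : B, mul a (add b c) = add (mul a b) (mul a (add (iota a) c)))
    (iotaInv : B → B)
    (hinv₁ : ∀ a : B, iotaInv (iota a) = a) (hinv₂ : ∀ a : B, iota (iotaInv a) = a)
    (oplus : B → B → B)
    (hoplus : ∀ a b : B, oplus a b = iotaInv (add (iota a) (iota b)))
    (opmul : B → B → B) (hopmul : ∀ a b : B, opmul a b = mul b a) :
    (∀ a b c : B, oplus (oplus a b) c = oplus a (oplus b c)) ∧
      (∀ a b c : B, opmul (opmul a b) c = opmul a (opmul b c)) ∧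
      (∀ a : B, opmul one a = a ∧ opmul a one = a) ∧
      (∀ a : B, opmul (inv a) a = one ∧ opmul a (inv a) = one) ∧
      ∀ a b c : B, opmul a (oplus b c) = oplus (opmul a b) (opmul a (oplus (inv a) c)) := by
  simp only [hopmul, hoplus]
  refine ⟨assoc_of_leftInverse iota iotaInv hinv₂ add add_assoc,
    fun a b c => (mul_assoc c b a).symm, fun a => ⟨mul_one a, one_mul a⟩,
    fun a => ⟨mul_inv a, inv_mul a⟩, fun a b c => ?_⟩
  rw [← iota_mul_iotaInv_add iota_mul dist hinv₂, hinv₁]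
end

section
/- Let (B,+,∘,ι) be an almost left semi-brace satisfying condition (C1): (ι(a) + b) ∘ ι(1) = ι(a) + (b ∘ ι(1)) for all a, b ∈ B. Define λ_a(b) := a ∘ (ι(a) + b), ρ_b(a) := \overline{(ι(a) + b)} ∘ b, and r : B × B → B × B by r(a,b) = (λ_a(b), ρ_b(a)). Then r is a set-theoretic solution of the Yang–Baxter equation if and only if condition (C2) holds: a + λ_b(c) ∘ (ι(1) + ρ_c(b)) = a + b ∘ (ι(1) + c) for all a, b, c ∈ B. -/
/-!
Put `e := ι 1`. The axiom for `ι` gives `ι a = ā ∘ e`, so `ι` is a bijection. The map `r`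
preserves the `∘`-product (`λ_a b ∘ ρ_b a = a ∘ b`), hence so do both sides of the braid
relation on triples, and it suffices to compare their first and third components. The first
components always agree, because the distributive law makes `a ↦ λ_a` multiplicative. Using
(C1), both third components take the form `(ι a + x)⁻¹ ∘ (b ∘ c)`, with `x = b ∘ (e + c)` on
one side and `x = λ_b c ∘ (e + ρ_c b)` on the other, so their equality for all `a` is (C2),
since `ι` is surjective.
-/

/- Almost left semi-brace: `(B,+)` a semigroup, `(B,∘)` a group with identity
`one` and inverse `inv`, and `iota : B → B` with `ι(a∘b) = b̄ ∘ ι(a)` and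
`a ∘ (b + c) = (a ∘ b) + a ∘ (ι(a) + c)`. -/

/-- `r × id` on `B × B × B`. -/
def r₁₂ {B : Type*} (r : B × B → B × B) : B × B × B → B × B × B :=
  fun p => ((r (p.1, p.2.1)).1, (r (p.1, p.2.1)).2, p.2.2)

/-- `id × r` on `B × B × B`. -/
def r₂₃ {B : Type*} (r : B × B → B × B) : B × B × B → B × B × B :=
  fun p => (p.1, r p.2)

/-- `r` is a set-theoretic solution of the Yang–Baxter equation. -/
def IsYBSolution {B : Type*} (r : B × B → B × B) : Prop :=
  (r₁₂ r) ∘ (r₂₃ r) ∘ (r₁₂ r) = (r₂₃ r) ∘ (r₁₂ r) ∘ (r₂₃ r)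

section YangBaxter

variable {G : Type*} [Group G]

theorem mul_r₁₂ {r : G × G → G × G} (hr : ∀ p, (r p).1 * (r p).2 = p.1 * p.2)
    (p : G × G × G) : (r₁₂ r p).1 * (r₁₂ r p).2.1 * (r₁₂ r p).2.2 = p.1 * p.2.1 * p.2.2 := by
  simp only [r₁₂, hr]

theorem mul_r₂₃ {r : G × G → G × G} (hr : ∀ p, (r p).1 * (r p).2 = p.1 * p.2)
    (p : G × G × G) : (r₂₃ r p).1 * (r₂₃ r p).2.1 * (r₂₃ r p).2.2 = p.1 * p.2.1 * p.2.2 := by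
  simp only [r₂₃, mul_assoc, hr]

theorem isYBSolution_iff_of_mul_eq {r : G × G → G × G}
    (hr : ∀ p, (r p).1 * (r p).2 = p.1 * p.2) :
    IsYBSolution r ↔ ∀ p : G × G × G,
      (r₁₂ r (r₂₃ r (r₁₂ r p))).1 = (r₂₃ r (r₁₂ r (r₂₃ r p))).1 ∧
        (r₁₂ r (r₂₃ r (r₁₂ r p))).2.2 = (r₂₃ r (r₁₂ r (r₂₃ r p))).2.2 := by
  refine ⟨fun h p => ⟨congrArg (·.1) (congrFun h p), congrArg (·.2.2) (congrFun h p)⟩,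
    fun h => funext fun p => ?_⟩
  obtain ⟨h₁, h₃⟩ := h p
  have hprod : (r₁₂ r (r₂₃ r (r₁₂ r p))).1 * (r₁₂ r (r₂₃ r (r₁₂ r p))).2.1 *
      (r₁₂ r (r₂₃ r (r₁₂ r p))).2.2 = (r₂₃ r (r₁₂ r (r₂₃ r p))).1 *
      (r₂₃ r (r₁₂ r (r₂₃ r p))).2.1 * (r₂₃ r (r₁₂ r (r₂₃ r p))).2.2 := by
    simp only [mul_r₁₂ hr, mul_r₂₃ hr]
  rw [h₁, h₃, mul_left_inj, mul_right_inj] at hprod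
  exact Prod.ext h₁ (Prod.ext hprod h₃)

end YangBaxter

namespace AlmostLeftSemiBrace

variable {B : Type*} [Group B] (add : B → B → B) (ι : B → B)

def lam (a b : B) : B := a * add (ι a) b

def rho (b a : B) : B := (add (ι a) b)⁻¹ * b

variable {ι}

theorem iota_eq_inv_mul (hι : ∀ a b, ι (a * b) = b⁻¹ * ι a) (a : B) : ι a = a⁻¹ * ι 1 := by
  simpa using hι 1 a

theorem iota_surjective (hι : ∀ a b, ι (a * b) = b⁻¹ * ι a) : Function.Surjective ι :=
  fun x => ⟨ι 1 * x⁻¹, by rw [iota_eq_inv_mul hι, mul_inv_rev, inv_inv, inv_mul_cancel_right]⟩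

variable {add}

theorem lam_mul_rho (a b : B) : lam add ι a b * rho add ι b a = a * b := by
  simp only [lam, rho, mul_assoc, mul_inv_cancel_left]

theorem lam_mul (hι : ∀ a b, ι (a * b) = b⁻¹ * ι a)
    (hdist : ∀ a b c, a * add b c = add (a * b) (a * add (ι a) c)) (a b c : B) :
    lam add ι (a * b) c = lam add ι a (lam add ι b c) := by
  rw [lam, lam, lam, hι, mul_assoc, hdist b, mul_inv_cancel_left]

theorem lam_lam_lam_rho (hι : ∀ a b, ι (a * b) = b⁻¹ * ι a)
    (hdist : ∀ a b c, a * add b c = add (a * b) (a * add (ι a) c)) (a b c : B) :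
    lam add ι (lam add ι a b) (lam add ι (rho add ι b a) c) = lam add ι a (lam add ι b c) := by
  rw [← lam_mul hι hdist, lam_mul_rho, lam_mul hι hdist]

theorem iota_rho (hι : ∀ a b, ι (a * b) = b⁻¹ * ι a)
    (hC1 : ∀ a b, add (ι a) b * ι 1 = add (ι a) (b * ι 1)) (a b : B) :
    ι (rho add ι b a) = b⁻¹ * add (ι a) (b * ι 1) := by
  rw [rho, hι, iota_eq_inv_mul hι (add (ι a) b)⁻¹, inv_inv, hC1]

theorem rho_rho (hassoc : ∀ a b c, add (add a b) c = add a (add b c))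
    (hι : ∀ a b, ι (a * b) = b⁻¹ * ι a)
    (hdist : ∀ a b c, a * add b c = add (a * b) (a * add (ι a) c))
    (hC1 : ∀ a b, add (ι a) b * ι 1 = add (ι a) (b * ι 1)) (a b c : B) :
    rho add ι c (rho add ι b a) = (add (ι a) (b * add (ι 1) c))⁻¹ * (b * c) := by
  have iota_rho_add : add (ι (rho add ι b a)) c = b⁻¹ * add (ι a) (b * add (ι 1) c) := by
    rw [eq_inv_mul_iff_mul_eq, iota_rho hι hC1, hdist, mul_inv_cancel_left, hassoc,
      hdist b (ι 1)]
  rw [rho, iota_rho_add, mul_inv_rev, inv_inv, mul_assoc]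

theorem rho_rho_eq_iff (hassoc : ∀ a b c, add (add a b) c = add a (add b c))
    (hι : ∀ a b, ι (a * b) = b⁻¹ * ι a)
    (hdist : ∀ a b c, a * add b c = add (a * b) (a * add (ι a) c))
    (hC1 : ∀ a b, add (ι a) b * ι 1 = add (ι a) (b * ι 1)) (a b c : B) :
    rho add ι c (rho add ι b a) = rho add ι (rho add ι c b) (rho add ι (lam add ι b c) a) ↔
      add (ι a) (lam add ι b c * add (ι 1) (rho add ι c b)) = add (ι a) (b * add (ι 1) c) := by
  rw [rho_rho hassoc hι hdist hC1, rho_rho hassoc hι hdist hC1, lam_mul_rho, mul_left_inj,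
    inv_inj, eq_comm]

theorem isYBSolution_iff (hassoc : ∀ a b c, add (add a b) c = add a (add b c))
    (hι : ∀ a b, ι (a * b) = b⁻¹ * ι a)
    (hdist : ∀ a b c, a * add b c = add (a * b) (a * add (ι a) c))
    (hC1 : ∀ a b, add (ι a) b * ι 1 = add (ι a) (b * ι 1)) :
    IsYBSolution (fun p : B × B => (lam add ι p.1 p.2, rho add ι p.2 p.1)) ↔
      ∀ a b c, add a (lam add ι b c * add (ι 1) (rho add ι c b)) = add a (b * add (ι 1) c) := by
  rw [isYBSolution_iff_of_mul_eq fun p => lam_mul_rho p.1 p.2]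
  simp only [Prod.forall, r₁₂, r₂₃, lam_lam_lam_rho hι hdist, rho_rho_eq_iff hassoc hι hdist hC1,
    true_and]
  symm
  exact (iota_surjective hι).forall

end AlmostLeftSemiBrace

theorem stmt_15_general (B : Type*)
    (add mul : B → B → B) (one : B) (inv : B → B) (iota : B → B)
    (add_assoc : ∀ a b c : B, add (add a b) c = add a (add b c))
    (mul_assoc : ∀ a b c : B, mul (mul a b) c = mul a (mul b c))
    (one_mul : ∀ a : B, mul one a = a) (mul_one : ∀ a : B, mul a one = a)
    (inv_mul : ∀ a : B, mul (inv a) a = one)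
    (iota_mul : ∀ a b : B, iota (mul a b) = mul (inv b) (iota a))
    (dist : ∀ a b c : B, mul a (add b c) = add (mul a b) (mul a (add (iota a) c)))
    (lam : B → B → B) (hlam : ∀ a b : B, lam a b = mul a (add (iota a) b))
    (rho : B → B → B) (hrho : ∀ b a : B, rho b a = mul (inv (add (iota a) b)) b)
    (C1 : ∀ a b : B, mul (add (iota a) b) (iota one) = add (iota a) (mul b (iota one))) :
    IsYBSolution (fun p : B × B => (lam p.1 p.2, rho p.2 p.1)) ↔
      ∀ a b c : B,
        add a (mul (lam b c) (add (iota one) (rho c b))) =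
          add a (mul b (add (iota one) c)) := by
  let : Group B :=
    { mul := mul, one := one, inv := inv, mul_assoc := mul_assoc, one_mul := one_mul,
      mul_one := mul_one, inv_mul_cancel := inv_mul }
  obtain rfl : lam = AlmostLeftSemiBrace.lam add iota := funext₂ hlam
  obtain rfl : rho = AlmostLeftSemiBrace.rho add iota := funext₂ hrho
  exact AlmostLeftSemiBrace.isYBSolution_iff add_assoc iota_mul dist C1

theorem stmt_15 (B : Type*)
    (add mul : B → B → B) (one : B) (inv : B → B) (iota : B → B)
    (add_assoc : ∀ a b c : B, add (add a b) c = add a (add b c))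
    (mul_assoc : ∀ a b c : B, mul (mul a b) c = mul a (mul b c))
    (one_mul : ∀ a : B, mul one a = a) (mul_one : ∀ a : B, mul a one = a)
    (inv_mul : ∀ a : B, mul (inv a) a = one) (mul_inv : ∀ a : B, mul a (inv a) = one)
    (iota_mul : ∀ a b : B, iota (mul a b) = mul (inv b) (iota a))
    (dist : ∀ a b c : B, mul a (add b c) = add (mul a b) (mul a (add (iota a) c)))
    (lam : B → B → B) (hlam : ∀ a b : B, lam a b = mul a (add (iota a) b))
    (rho : B → B → B) (hrho : ∀ b a : B, rho b a = mul (inv (add (iota a) b)) b)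
    (C1 : ∀ a b : B, mul (add (iota a) b) (iota one) = add (iota a) (mul b (iota one))) :
    IsYBSolution (fun p : B × B => (lam p.1 p.2, rho p.2 p.1)) ↔
      ∀ a b c : B,
        add a (mul (lam b c) (add (iota one) (rho c b))) =
          add a (mul b (add (iota one) c)) :=
  stmt_15_general B add mul one inv iota add_assoc mul_assoc one_mul mul_one inv_mul iota_mul dist
    lam hlam rho hrho C1
end

section
/- Let (B,+,∘,ι) be an almost left semi-brace satisfying condition (C1): (ι(a) + b) ∘ ι(1) = ι(a) + (b ∘ ι(1)) for all a, b ∈ B, and define λ_a(b) := a ∘ (ι(a) + b) and ρ_b(a) := \overline{(ι(a) + b)} ∘ b. If ρ is an anti-homomorphism, i.e., ρ_{u ∘ v}(x) = ρ_v(ρ_u(x)) for all u, v, x ∈ B, then condition (C2) holds: a + λ_b(c) ∘ (ι(1) + ρ_c(b)) = a + b ∘ (ι(1) + c) for all a, b, c ∈ B. -/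
/-!
Since `ι(x) = x̄ ∘ ι(1)`, the map `ι` is onto, so every `a` is some `ι(x)`. Unfolding the
anti-homomorphism identity `ρ_{u∘v}(x) = ρ_v(ρ_u(x))` gives `ι(x) + u ∘ v = u ∘ (ι(ρ_u(x)) + v)`,
which moves `a + u ∘ -` inside `u ∘ -`; there the left distributivity at `1`, namely
`p + q = p + (ι(1) + q)`, erases the `ι(1)`. Both sides of (C2) thus reduce to `a + b ∘ c`,
because `λ_b(c) ∘ ρ_c(b) = b ∘ c`.
-/

section AlmostLeftSemiBrace

variable {B : Type*} [Group B] {add : B → B → B} {iota : B → B}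

theorem iota_eq_inv_mul_iota_one_s17 (iota_mul : ∀ a b : B, iota (a * b) = b⁻¹ * iota a) (x : B) :
    iota x = x⁻¹ * iota 1 := by
  simpa only [one_mul] using iota_mul 1 x

theorem iota_surjective (iota_mul : ∀ a b : B, iota (a * b) = b⁻¹ * iota a) :
    Function.Surjective iota :=
  fun a => ⟨iota 1 * a⁻¹, by
    rw [iota_eq_inv_mul_iota_one_s17 iota_mul, mul_inv_rev, inv_inv, mul_assoc, inv_mul_cancel,
      mul_one]⟩

theorem add_iota_one_add
    (dist : ∀ a b c : B, a * add b c = add (a * b) (a * add (iota a) c)) (p q : B) :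
    add p (add (iota 1) q) = add p q := by
  simpa only [one_mul] using (dist 1 p q).symm

theorem iota_add_mul_eq_of_antihom {rho : B → B → B}
    (hrho : ∀ b a : B, rho b a = (add (iota a) b)⁻¹ * b)
    (hanti : ∀ u v x : B, rho (u * v) x = rho v (rho u x)) (x u v : B) :
    add (iota x) (u * v) = u * add (iota (rho u x)) v := by
  have h := hanti u v x
  rw [hrho, hrho, ← mul_assoc, mul_left_inj] at h
  rw [← inv_inj, mul_inv_rev, ← h, mul_inv_cancel_right]

theorem add_mul_add_iota_one {rho : B → B → B}
    (iota_mul : ∀ a b : B, iota (a * b) = b⁻¹ * iota a)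
    (dist : ∀ a b c : B, a * add b c = add (a * b) (a * add (iota a) c))
    (hrho : ∀ b a : B, rho b a = (add (iota a) b)⁻¹ * b)
    (hanti : ∀ u v x : B, rho (u * v) x = rho v (rho u x)) (a u w : B) :
    add a (u * add (iota 1) w) = add a (u * w) := by
  obtain ⟨x, rfl⟩ := iota_surjective iota_mul a
  rw [iota_add_mul_eq_of_antihom hrho hanti, iota_add_mul_eq_of_antihom hrho hanti,
    add_iota_one_add dist]

end AlmostLeftSemiBrace

theorem stmt_17_general (B : Type*)
    (add mul : B → B → B) (one : B) (inv : B → B) (iota : B → B)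
    (mul_assoc : ∀ a b c : B, mul (mul a b) c = mul a (mul b c))
    (one_mul : ∀ a : B, mul one a = a)
    (inv_mul : ∀ a : B, mul (inv a) a = one)
    (iota_mul : ∀ a b : B, iota (mul a b) = mul (inv b) (iota a))
    (dist : ∀ a b c : B, mul a (add b c) = add (mul a b) (mul a (add (iota a) c)))
    (lam : B → B → B) (hlam : ∀ a b : B, lam a b = mul a (add (iota a) b))
    (rho : B → B → B) (hrho : ∀ b a : B, rho b a = mul (inv (add (iota a) b)) b)
    (hanti : ∀ u v x : B, rho (mul u v) x = rho v (rho u x)) :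
    ∀ a b c : B,
      add a (mul (lam b c) (add (iota one) (rho c b))) =
        add a (mul b (add (iota one) c)) := by
  intro a b c
  let : Mul B := ⟨mul⟩
  let : One B := ⟨one⟩
  let : Inv B := ⟨inv⟩
  let : Group B := Group.ofLeftAxioms mul_assoc one_mul inv_mul
  have lam_mul_rho : lam b c * rho c b = b * c := by
    rw [hlam, hrho]
    exact (mul_assoc ..).trans (congrArg (b * ·) (mul_inv_cancel_left ..))
  have reduce := add_mul_add_iota_one (add := add) iota_mul dist hrho hanti a
  calc add a (lam b c * add (iota 1) (rho c b))
      = add a (lam b c * rho c b) := reduce _ _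
    _ = add a (b * c) := by rw [lam_mul_rho]
    _ = add a (b * add (iota 1) c) := (reduce b c).symm

/-- Almost left semi-brace: `(B,+)` a semigroup, `(B,∘)` a group with identity
`one` and inverse `inv`, and `iota : B → B` with `ι(a∘b) = b̄ ∘ ι(a)` and
`a ∘ (b + c) = (a ∘ b) + a ∘ (ι(a) + c)`. -/
theorem stmt_17 (B : Type*)
    (add mul : B → B → B) (one : B) (inv : B → B) (iota : B → B)
    (add_assoc : ∀ a b c : B, add (add a b) c = add a (add b c))
    (mul_assoc : ∀ a b c : B, mul (mul a b) c = mul a (mul b c))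
    (one_mul : ∀ a : B, mul one a = a) (mul_one : ∀ a : B, mul a one = a)
    (inv_mul : ∀ a : B, mul (inv a) a = one) (mul_inv : ∀ a : B, mul a (inv a) = one)
    (iota_mul : ∀ a b : B, iota (mul a b) = mul (inv b) (iota a))
    (dist : ∀ a b c : B, mul a (add b c) = add (mul a b) (mul a (add (iota a) c)))
    (lam : B → B → B) (hlam : ∀ a b : B, lam a b = mul a (add (iota a) b))
    (rho : B → B → B) (hrho : ∀ b a : B, rho b a = mul (inv (add (iota a) b)) b)
    (C1 : ∀ a b : B, mul (add (iota a) b) (iota one) = add (iota a) (mul b (iota one)))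
    (hanti : ∀ u v x : B, rho (mul u v) x = rho v (rho u x)) :
    ∀ a b c : B,
      add a (mul (lam b c) (add (iota one) (rho c b))) =
        add a (mul b (add (iota one) c)) :=
  stmt_17_general B add mul one inv iota mul_assoc one_mul inv_mul iota_mul dist lam hlam rho hrho
    hanti
end

section
/- Let (B,+,∘,ι) be an almost left semi-brace satisfying condition (C1): (ι(a) + b) ∘ ι(1) = ι(a) + (b ∘ ι(1)) for all a, b ∈ B, and condition (C2): a + λ_b(c) ∘ (ι(1) + ρ_c(b)) = a + b ∘ (ι(1) + c) for all a, b, c ∈ B, where λ_a(b) := a ∘ (ι(a) + b) and ρ_b(a) := \overline{(ι(a) + b)} ∘ b. Let r(a,b) = (λ_a(b), ρ_b(a)), and let r'(a,b) = (λ'_a(b), ρ'_b(a)) be the solution associated to the left semi-brace (B,⊕,∘ᵒᵖ), where λ'_a(b) := a ∘ᵒᵖ (ā ⊕ b) and ρ'_b(a) := \overline{(ā ⊕ b)} ∘ᵒᵖ b. Then the map f : B → B, f(a) = ā, is an isomorphism of solutions from (B,r) to (B,r'); that is, f is bijective and (f × f) ∘ r = r' ∘ (f × f). -/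
/-!
Condition (C1) together with `ι(a ∘ b) = b̄ ∘ ι(a)` (which gives `ι(ā) = a ∘ ι(1)`) yields
`ι((ι(a) + b)‾) = ι(a) + ι(b̄)`, i.e. `(ι(a) + b)‾ = a ⊕ b̄`. Inverting
`λ_a(b) = a ∘ (ι(a) + b)` and `ρ_b(a) = (ι(a) + b)‾ ∘ b` in the group `(B, ∘)` then produces exactly
`λ'_{ā}(b̄)` and `ρ'_{b̄}(ā)`.
-/

section

variable {G : Type*} [Group G] {ι : G → G}

theorem apply_inv_eq_mul_apply_one (hι : ∀ a b, ι (a * b) = b⁻¹ * ι a) (a : G) :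
    ι a⁻¹ = a * ι 1 := by
  have h := hι a⁻¹ a
  rw [inv_mul_cancel] at h
  rw [h, mul_inv_cancel_left]

theorem apply_inv_add_eq (add : G → G → G) (hι : ∀ a b, ι (a * b) = b⁻¹ * ι a)
    (hC1 : ∀ a b, add (ι a) b * ι 1 = add (ι a) (b * ι 1)) (a b : G) :
    ι (add (ι a) b)⁻¹ = add (ι a) (ι b⁻¹) := by
  rw [apply_inv_eq_mul_apply_one hι, hC1, ← apply_inv_eq_mul_apply_one hι]

end

theorem stmt_19_general (B : Type*)
    (add mul : B → B → B) (one : B) (inv : B → B) (iota : B → B)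
    (mul_assoc : ∀ a b c : B, mul (mul a b) c = mul a (mul b c))
    (one_mul : ∀ a : B, mul one a = a) (mul_one : ∀ a : B, mul a one = a)
    (inv_mul : ∀ a : B, mul (inv a) a = one)
    (iota_mul : ∀ a b : B, iota (mul a b) = mul (inv b) (iota a))
    (lam : B → B → B) (hlam : ∀ a b : B, lam a b = mul a (add (iota a) b))
    (rho : B → B → B) (hrho : ∀ b a : B, rho b a = mul (inv (add (iota a) b)) b)
    (C1 : ∀ a b : B, mul (add (iota a) b) (iota one) = add (iota a) (mul b (iota one)))
    (iotaInv : B → B)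
    (hinv₁ : ∀ a : B, iotaInv (iota a) = a)
    (oplus : B → B → B)
    (hoplus : ∀ a b : B, oplus a b = iotaInv (add (iota a) (iota b)))
    (opmul : B → B → B) (hopmul : ∀ a b : B, opmul a b = mul b a)
    (lam' : B → B → B) (hlam' : ∀ a b : B, lam' a b = opmul a (oplus (inv a) b))
    (rho' : B → B → B) (hrho' : ∀ b a : B, rho' b a = opmul (inv (oplus (inv a) b)) b) :
    Function.Bijective (fun a : B => inv a) ∧
      (fun p : B × B => ((inv (lam p.1 p.2), inv (rho p.2 p.1)) : B × B)) =
        (fun p : B × B => ((lam' (inv p.1) (inv p.2), rho' (inv p.2) (inv p.1)) : B × B)) := by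
  -- Mathlib's group lemmas are transported by defeq, since `rw` does not unfold this instance.
  let _ : Group B :=
    { mul, one, inv, mul_assoc, one_mul, mul_one, inv_mul_cancel := inv_mul }
  have inv_inv' : ∀ x : B, inv (inv x) = x := inv_inv
  have inv_mul_rev : ∀ x y : B, inv (mul x y) = mul (inv y) (inv x) := mul_inv_rev
  have oplus_inv : ∀ a b : B, oplus a (inv b) = inv (add (iota a) b) := fun a b => by
    rw [hoplus]
    exact (congrArg iotaInv (apply_inv_add_eq add iota_mul C1 a b)).symm.trans (hinv₁ _)
  refine ⟨inv_involutive.bijective, funext fun ⟨a, b⟩ => ?_⟩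
  simp only [hlam, hrho, hlam', hrho', hopmul, inv_inv', oplus_inv, inv_mul_rev]

/-- Almost left semi-brace: `(B,+)` a semigroup, `(B,∘)` a group with identity
`one` and inverse `inv`, and `iota : B → B` with `ι(a∘b) = b̄ ∘ ι(a)` and
`a ∘ (b + c) = (a ∘ b) + a ∘ (ι(a) + c)`. -/
theorem stmt_19 (B : Type*)
    (add mul : B → B → B) (one : B) (inv : B → B) (iota : B → B)
    (add_assoc : ∀ a b c : B, add (add a b) c = add a (add b c))
    (mul_assoc : ∀ a b c : B, mul (mul a b) c = mul a (mul b c))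
    (one_mul : ∀ a : B, mul one a = a) (mul_one : ∀ a : B, mul a one = a)
    (inv_mul : ∀ a : B, mul (inv a) a = one) (mul_inv : ∀ a : B, mul a (inv a) = one)
    (iota_mul : ∀ a b : B, iota (mul a b) = mul (inv b) (iota a))
    (dist : ∀ a b c : B, mul a (add b c) = add (mul a b) (mul a (add (iota a) c)))
    (lam : B → B → B) (hlam : ∀ a b : B, lam a b = mul a (add (iota a) b))
    (rho : B → B → B) (hrho : ∀ b a : B, rho b a = mul (inv (add (iota a) b)) b)
    (C1 : ∀ a b : B, mul (add (iota a) b) (iota one) = add (iota a) (mul b (iota one)))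
    (C2 : ∀ a b c : B,
      add a (mul (lam b c) (add (iota one) (rho c b))) =
        add a (mul b (add (iota one) c)))
    (iotaInv : B → B)
    (hinv₁ : ∀ a : B, iotaInv (iota a) = a) (hinv₂ : ∀ a : B, iota (iotaInv a) = a)
    (oplus : B → B → B)
    (hoplus : ∀ a b : B, oplus a b = iotaInv (add (iota a) (iota b)))
    (opmul : B → B → B) (hopmul : ∀ a b : B, opmul a b = mul b a)
    (lam' : B → B → B) (hlam' : ∀ a b : B, lam' a b = opmul a (oplus (inv a) b))
    (rho' : B → B → B) (hrho' : ∀ b a : B, rho' b a = opmul (inv (oplus (inv a) b)) b) :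
    Function.Bijective (fun a : B => inv a) ∧
      (fun p : B × B => ((inv (lam p.1 p.2), inv (rho p.2 p.1)) : B × B)) =
        (fun p : B × B => ((lam' (inv p.1) (inv p.2), rho' (inv p.2) (inv p.1)) : B × B)) :=
  stmt_19_general B add mul one inv iota mul_assoc one_mul mul_one inv_mul iota_mul lam hlam rho
    hrho C1 iotaInv hinv₁ oplus hoplus opmul hopmul lam' hlam' rho' hrho'
end
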